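/- arXiv:2102.03857 — 2 statements merged into one kernel-verified Lean document; each statement's English description precedes it below -/
import Mathlib

section
/- Let n ≥ 3 with n not divisible by 4, let C_n be the cycle graph on n vertices, let S be a multiset of positive integers with |S| = n, and let k be a nonnegative integer. Then C_n is S-fair with fairness constant k if and only if k is even, k/2 ≥ 1, and S equals the multiset consisting of the single value k/2 repeated n times. -/
open scoped Classical

/-- Sum of labels over the open neighborhood of `v`. -/
noncomputable def nbrSum {V : Type*} [Fintype V] (G : SimpleGraph V) (f : V → ℕ) (v : V) : ℕ :=
  ∑ u : V, if G.Adj v u then f u else 0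

/-- `f` is a bijective labeling of `G` by the multiset `S` witnessing fairness constant `k`. -/
def IsFairLabeling {V : Type*} [Fintype V] (G : SimpleGraph V) (S : Multiset ℕ)
    (f : V → ℕ) (k : ℕ) : Prop :=
  Finset.univ.val.map f = S ∧ ∀ v : V, nbrSum G f v = k

/-- `G` is `S`-fair. -/
def IsFair {V : Type*} [Fintype V] (G : SimpleGraph V) (S : Multiset ℕ) : Prop :=
  ∃ (f : V → ℕ) (k : ℕ), IsFairLabeling G S f k

/-!
On `C_n` the fairness condition at `v + 1` reads `f v + f (v + 2) = k`; comparing it with the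
condition at `v + 3` shows that `f` is `4`-periodic. When `4 ∤ n` some odd multiple of `2`
vanishes in `ℤ/n`, so `2` is a multiple of `4` there and `f` is even `2`-periodic. Then
`2 f v = k` for every `v`, so `f` is the constant `k / 2`.
-/

open Function SimpleGraph

theorem Function.periodic_two_nsmul_of_forall_add_eq {G M : Type*} [AddMonoid G]
    [AddCancelCommMonoid M] {f : G → M} {d : G} {k : M} (h : ∀ x, f x + f (x + d) = k) :
    Periodic f (2 • d) := fun x => by
  have hx := h (x + d)
  rw [← h x, add_comm, add_assoc] at hx
  rw [two_nsmul]
  exact add_right_cancel hx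

theorem Function.Periodic.of_two_nsmul {G α : Type*} [AddGroup G] {f : G → α} {a : G}
    (h : Periodic f (2 • a)) {t : ℕ} (ht : (2 * t + 1) • a = 0) : Periodic f a := by
  have ha : a = -(t • 2 • a) := by
    rw [succ_nsmul, mul_nsmul] at ht
    exact eq_neg_of_add_eq_zero_right ht
  rw [ha]
  exact (h.nsmul t).neg

open Fin.CommRing Fin.NatCast in
theorem Fin.exists_odd_nsmul_two_eq_zero {N : ℕ} [NeZero N] (hN : ¬ 4 ∣ N) :
    ∃ t : ℕ, (2 * t + 1) • (2 : Fin N) = 0 := by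
  obtain ⟨t, ht⟩ : ∃ t, N ∣ (2 * t + 1) * 2 := by
    rcases Nat.even_or_odd N with ⟨s, rfl⟩ | ⟨s, rfl⟩
    · exact ⟨s / 2, ⟨1, by omega⟩⟩
    · exact ⟨s, ⟨2, by ring⟩⟩
  refine ⟨t, ?_⟩
  rw [nsmul_eq_mul]
  exact_mod_cast (CharP.cast_eq_zero_iff (Fin N) N _).2 ht

theorem nbrSum_eq_sum_neighborFinset {V : Type*} [Fintype V] (G : SimpleGraph V)
    [DecidableRel G.Adj] (f : V → ℕ) (v : V) : nbrSum G f v = ∑ u ∈ G.neighborFinset v, f u := by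
  rw [nbrSum, neighborFinset_eq_filter, Finset.sum_filter]
  congr! 2

theorem nbrSum_cycleGraph (n : ℕ) (f : Fin (n + 3) → ℕ) (v : Fin (n + 3)) :
    nbrSum (cycleGraph (n + 3)) f v = f (v - 1) + f (v + 1) := by
  have hne : v - 1 ≠ v + 1 := by
    simp only [ne_eq, sub_eq_iff_eq_add, add_assoc v, left_eq_add]
    exact ne_of_beq_false rfl
  rw [nbrSum_eq_sum_neighborFinset, cycleGraph_neighborFinset, Finset.sum_pair hne]

theorem two_mul_eq_of_forall_nbrSum_cycleGraph_eq {n : ℕ} (hn : ¬ 4 ∣ n + 3)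
    {f : Fin (n + 3) → ℕ} {k : ℕ} (hf : ∀ v, nbrSum (cycleGraph (n + 3)) f v = k)
    (v : Fin (n + 3)) : 2 * f v = k := by
  have hstep : ∀ x, f x + f (x + 2) = k := fun x => by
    rw [← hf (x + 1), nbrSum_cycleGraph, add_sub_cancel_right, add_assoc]
    rfl
  obtain ⟨t, ht⟩ := Fin.exists_odd_nsmul_two_eq_zero hn
  have hper : Periodic f 2 := (periodic_two_nsmul_of_forall_add_eq hstep).of_two_nsmul ht
  rw [two_mul]
  nth_rw 2 [← hper v]
  exact hstep v

theorem isFairLabeling_const_cycleGraph (n c : ℕ) :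
    IsFairLabeling (cycleGraph (n + 3)) (Multiset.replicate (n + 3) c) (fun _ => c) (2 * c) :=
  ⟨by simp [Multiset.map_const'], fun v => by rw [nbrSum_cycleGraph, two_mul]⟩

theorem stmt_9_general (n : ℕ) (hn : 3 ≤ n) (hndvd : ¬ 4 ∣ n)
    (S : Multiset ℕ) (hSpos : ∀ s ∈ S, 0 < s) (k : ℕ) :
    (∃ f, IsFairLabeling (SimpleGraph.cycleGraph n) S f k) ↔
      2 ∣ k ∧ 1 ≤ k / 2 ∧ S = Multiset.replicate n (k / 2) := by
  obtain ⟨m, rfl⟩ : ∃ m, n = m + 3 := ⟨n - 3, by omega⟩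
  constructor
  · rintro ⟨f, hf⟩
    have hconst := two_mul_eq_of_forall_nbrSum_cycleGraph_eq hndvd hf.2
    have hval : ∀ v, f v = k / 2 := fun v => by have := hconst v; omega
    have hS : S = Multiset.replicate (m + 3) (k / 2) := by
      rw [← hf.1, Multiset.map_congr rfl fun v _ => hval v, Multiset.map_const',
        Finset.card_val, Finset.card_univ, Fintype.card_fin]
    refine ⟨⟨f 0, (hconst 0).symm⟩, hSpos _ ?_, hS⟩
    exact hS ▸ Multiset.mem_replicate.2 ⟨by omega, rfl⟩
  · rintro ⟨⟨c, rfl⟩, -, rfl⟩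
    rw [Nat.mul_div_cancel_left c two_pos]
    exact ⟨_, isFairLabeling_const_cycleGraph m c⟩

/-- for `n ≥ 3` not divisible by `4`, the cycle `C_n` is `S`-fair with
fairness constant `k` iff `k` is even, `k/2 ≥ 1`, and `S` consists of the single value
`k/2` repeated `n` times. -/
theorem stmt_9 (n : ℕ) (hn : 3 ≤ n) (hndvd : ¬ 4 ∣ n)
    (S : Multiset ℕ) (hSpos : ∀ s ∈ S, 0 < s) (hScard : Multiset.card S = n) (k : ℕ) :
    (∃ f, IsFairLabeling (SimpleGraph.cycleGraph n) S f k) ↔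
      2 ∣ k ∧ 1 ≤ k / 2 ∧ S = Multiset.replicate n (k / 2) :=
  stmt_9_general n hn hndvd S hSpos k
end

section
/- Let m be a positive integer, let W be a multiset of 3m positive integers, assume m divides ∑ W, and set sum = (∑ W)/m. Let G = m·K_{1,3} be the disjoint union of m copies of the star K_{1,3}, and let S = W ⊎ {sum repeated m times}. Then G is S-fair if and only if W can be partitioned into m multisets W_1, …, W_m, each of size 3, such that ∑ W_i = sum for every i ∈ [m]. -/
open scoped Classical

/-- The disjoint union of `t` vertex-disjoint copies of the graph `H`. -/
def copies (t : ℕ) {W : Type*} (H : SimpleGraph W) : SimpleGraph (Fin t × W) where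
  Adj x y := x.1 = y.1 ∧ H.Adj x.2 y.2
  symm := ⟨fun _ _ h => ⟨h.1.symm, h.2.symm⟩⟩
  loopless := ⟨fun x h => H.loopless.irrefl x.2 h.2⟩

/-!
In `m · K_{1,n}` with `n ≥ 1`, a leaf sees only its centre, so a fair labeling with constant `k`
puts `k` on every centre; a centre sees exactly its `n` leaves, so the leaf labels of each star
form an `n`-element multiset of sum `k`, and conversely such data is a fair labeling. For
`S = W ⊎ {s, …, s}` with `s = ∑ W / m`, comparing total sums gives `∑ W + m s = 2 m k`, hence
`k = s`, and cancelling the `m` centre labels leaves the partition of `W` into the leaf multisets.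
-/

open Finset

lemma Finset.univ_val_map_eq_sum_singleton {V α : Type*} [Fintype V] (f : V → α) :
    univ.val.map f = ∑ x, {f x} := by
  rw [← Multiset.sum_map_singleton (univ.val.map f), Multiset.map_map]
  rfl

lemma Multiset.exists_univ_val_map_eq {α : Type*} {n : ℕ} (s : Multiset α) (h : card s = n) :
    ∃ g : Fin n → α, univ.val.map g = s := by
  obtain ⟨l, rfl⟩ : ∃ l : List α, (l : Multiset α) = s := Quotient.exists_rep s
  rw [coe_card] at h
  subst h
  exact ⟨l.get, by rw [_root_.Fin.univ_val_map, List.ofFn_get]⟩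

lemma nbrSum_copies {t : ℕ} {β : Type*} [Fintype β] (H : SimpleGraph β) (f : Fin t × β → ℕ)
    (i : Fin t) (w : β) :
    nbrSum (copies t H) f (i, w) = nbrSum H (fun w' => f (i, w')) w := by
  unfold nbrSum
  rw [Fintype.sum_prod_type, Finset.sum_eq_single i (fun j _ hj => by simp [copies, Ne.symm hj])
    (by simp)]
  simp [copies]

section CompleteBipartite

variable {α β : Type*} [Fintype α] [Fintype β] (f : α ⊕ β → ℕ)

lemma nbrSum_completeBipartiteGraph_inl (a : α) :
    nbrSum (completeBipartiteGraph α β) f (Sum.inl a) = ∑ b, f (Sum.inr b) := by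
  simp [nbrSum, Fintype.sum_sum_type]

lemma nbrSum_completeBipartiteGraph_inr (b : β) :
    nbrSum (completeBipartiteGraph α β) f (Sum.inr b) = ∑ a, f (Sum.inl a) := by
  simp [nbrSum, Fintype.sum_sum_type]

end CompleteBipartite

lemma univ_val_map_copies_star {m n : ℕ} (f : Fin m × (Fin 1 ⊕ Fin n) → ℕ) :
    univ.val.map f = ∑ i, ({f (i, Sum.inl 0)} + univ.val.map fun j => f (i, Sum.inr j)) := by
  simp only [Finset.univ_val_map_eq_sum_singleton, Fintype.sum_prod_type, Fintype.sum_sum_type,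
    Fin.sum_univ_one]

theorem isFair_copies_star_iff {m n : ℕ} (hn : 0 < n) {S : Multiset ℕ} :
    IsFair (copies m (completeBipartiteGraph (Fin 1) (Fin n))) S ↔
      ∃ (k : ℕ) (P : Fin m → Multiset ℕ), (∀ i, Multiset.card (P i) = n) ∧
        (∀ i, (P i).sum = k) ∧ S = Multiset.replicate m k + ∑ i, P i := by
  constructor
  · rintro ⟨f, k, hS, hfair⟩
    have hcenter (i : Fin m) : f (i, Sum.inl 0) = k := by
      simpa [nbrSum_copies, nbrSum_completeBipartiteGraph_inr] using hfair (i, Sum.inr ⟨0, hn⟩)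
    have hleaves (i : Fin m) : ∑ j, f (i, Sum.inr j) = k := by
      simpa [nbrSum_copies, nbrSum_completeBipartiteGraph_inl] using hfair (i, Sum.inl 0)
    refine ⟨k, fun i => univ.val.map fun j => f (i, Sum.inr j), by simp, hleaves, ?_⟩
    rw [← hS, univ_val_map_copies_star, sum_add_distrib]
    simp [hcenter, Multiset.nsmul_singleton]
  · rintro ⟨k, P, hcard, hsum, rfl⟩
    choose g hg using fun i => Multiset.exists_univ_val_map_eq (P i) (hcard i)
    refine ⟨fun x => Sum.elim (fun _ => k) (g x.1) x.2, k, ?_, ?_⟩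
    · rw [univ_val_map_copies_star, sum_add_distrib]
      simp [hg, Multiset.nsmul_singleton]
    · rintro ⟨i, a | j⟩
      · rw [nbrSum_copies, nbrSum_completeBipartiteGraph_inl, ← hsum i, ← hg i]
        rfl
      · simp [nbrSum_copies, nbrSum_completeBipartiteGraph_inr]

theorem stmt_12_general (m : ℕ) (hm : 0 < m)
    (W : Multiset ℕ) (hdvd : m ∣ W.sum) :
    IsFair (copies m (completeBipartiteGraph (Fin 1) (Fin 3)))
        (W + Multiset.replicate m (W.sum / m)) ↔
      ∃ P : Fin m → Multiset ℕ,
        (∑ i : Fin m, P i) = W ∧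
        (∀ i : Fin m, Multiset.card (P i) = 3) ∧
        (∀ i : Fin m, (P i).sum = W.sum / m) := by
  rw [isFair_copies_star_iff three_pos]
  constructor
  · rintro ⟨k, P, hcard, hsum, hS⟩
    have hk : k = W.sum / m := by
      have hW : W.sum = m * (W.sum / m) := (Nat.mul_div_cancel' hdvd).symm
      have htotal := congrArg Multiset.sum hS
      simp only [Multiset.sum_add, Multiset.sum_replicate, Multiset.sum_sum, hsum, sum_const,
        card_univ, Fintype.card_fin, smul_eq_mul] at htotal
      exact Nat.eq_of_mul_eq_mul_left hm (by omega)
    subst hk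
    rw [add_comm, add_right_inj] at hS
    exact ⟨P, hS.symm, hcard, hsum⟩
  · rintro ⟨P, rfl, hcard, hsum⟩
    exact ⟨_, P, hcard, hsum, add_comm _ _⟩

/-- with `W` a multiset of `3m` positive integers such that `m ∣ ∑ W` and
`sum = (∑ W)/m`, the disjoint union of `m` copies of the star `K_{1,3}` is
`(W ⊎ {sum, …, sum})`-fair (with `sum` repeated `m` times) iff `W` partitions into `m`
triples each of sum `sum`. -/
theorem stmt_12 (m : ℕ) (hm : 0 < m)
    (W : Multiset ℕ) (hWpos : ∀ w ∈ W, 0 < w) (hWcard : Multiset.card W = 3 * m)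
    (hdvd : m ∣ W.sum) :
    IsFair (copies m (completeBipartiteGraph (Fin 1) (Fin 3)))
        (W + Multiset.replicate m (W.sum / m)) ↔
      ∃ P : Fin m → Multiset ℕ,
        (∑ i : Fin m, P i) = W ∧
        (∀ i : Fin m, Multiset.card (P i) = 3) ∧
        (∀ i : Fin m, (P i).sum = W.sum / m) :=
  stmt_12_general m hm W hdvd
end
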